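/- Let R be a binary relation on ℕ whose convolution language is regular. Then there exists a constant D > 0 with the following property (Pumping Rule 1): for every threshold l ∈ ℕ and every pair (m,n) ∈ R such that each of m and n is either < l or ≥ l + D, the pair (m',n') also lies in R, where m' = m + D if m ≥ l + D and m' = m if m < l, and likewise n' = n + D if n ≥ l + D and n' = n if n < l. -/

import Mathlib

/-- The convolution word of the pair `(m, n)`, over the three-letter alphabet `Fin 3`
(`0` plays the role of `s`, `1` of `l`, `2` of `r`). -/
def convWord (m n : ℕ) : List (Fin 3) :=
  List.replicate (min m n) 0 ++ List.replicate (m - min m n) 1 ++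
    List.replicate (n - min m n) 2

/-- The convolution language of a binary relation on `ℕ`. -/
def convLang (R : ℕ → ℕ → Prop) : Language (Fin 3) :=
  {w | ∃ m n, R m n ∧ w = convWord m n}

/-- A binary relation on `ℕ` is regular if its convolution language is regular. -/
def RegularRel (R : ℕ → ℕ → Prop) : Prop :=
  (convLang R).IsRegular

/-!
Let `M` be a DFA with `k` states accepting the convolution language of `R`, and put `D = k!`.
On a unary run of length `t ≥ k` the states of `M` have already entered a cycle, whose length
divides `D`; so lengthening a run of `t ≥ k` equal letters by `D` does not change the state `M`
reaches. The pumped word `convWord m' n'` arises from `convWord m n` in exactly this way: the run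
of `s` is lengthened when both coordinates are large, the run of `l` (or `r`) when only `m`
(or `n`) is. As `convWord` is injective, acceptance of the pumped word means `R m' n'`.
-/

open Function Fintype Nat List

theorem Function.iterate_mem_periodicPts_of_card_le {α : Type*} [Fintype α] (f : α → α)
    (x : α) {t : ℕ} (ht : card α ≤ t) : f^[t] x ∈ periodicPts f := by
  have periodic_of_lt : ∀ {i j : ℕ}, i < j → f^[i] x = f^[j] x → f^[i] x ∈ periodicPts f :=
    fun {i j} hij heq => mk_mem_periodicPts (n := j - i) (by omega) <| by
      rw [IsPeriodicPt, IsFixedPt, ← iterate_add_apply, Nat.sub_add_cancel hij.le, ← heq]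
  obtain ⟨i, hi, hperiodic⟩ : ∃ i ≤ card α, f^[i] x ∈ periodicPts f := by
    obtain ⟨i, j, hne, heq⟩ := Fintype.exists_ne_map_eq_of_card_lt
      (fun i : Fin (card α + 1) => f^[i] x) (by simp)
    rcases lt_or_gt_of_ne (Fin.val_ne_of_ne hne) with hij | hji
    · exact ⟨i, by omega, periodic_of_lt hij heq⟩
    · exact ⟨j, by omega, periodic_of_lt hji heq.symm⟩
  obtain ⟨n, hn, hp⟩ := mem_periodicPts.mp hperiodic
  rw [← Nat.sub_add_cancel (hi.trans ht), iterate_add_apply]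
  exact mk_mem_periodicPts hn (hp.apply_iterate _)

theorem Function.iterate_add_factorial_card_of_card_le {α : Type*} [Fintype α] (f : α → α)
    (x : α) {t : ℕ} (ht : card α ≤ t) : f^[t + (card α)!] x = f^[t] x := by
  rw [add_comm, iterate_add_apply]
  exact isPeriodicPt_factorial_card_of_mem_periodicPts (iterate_mem_periodicPts_of_card_le f x ht)

namespace DFA

variable {α σ : Type*} (M : DFA α σ)

theorem evalFrom_replicate (q : σ) (a : α) (t : ℕ) :
    M.evalFrom q (replicate t a) = (M.step · a)^[t] q := by
  induction t generalizing q with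
  | zero => rfl
  | succ t ih => rw [replicate_succ, evalFrom_cons, ih, iterate_succ_apply]

variable [Fintype σ]

theorem evalFrom_replicate_add_factorial_card (q : σ) (a : α) {t : ℕ} (ht : card σ ≤ t) :
    M.evalFrom q (replicate (t + (card σ)!) a) = M.evalFrom q (replicate t a) := by
  rw [evalFrom_replicate, evalFrom_replicate, iterate_add_factorial_card_of_card_le _ _ ht]

end DFA

theorem convWord_add_add (m n k : ℕ) :
    convWord (m + k) (n + k) = replicate k 0 ++ convWord m n := by
  rw [convWord, Nat.add_min_add_right, Nat.add_sub_add_right, Nat.add_sub_add_right,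
    Nat.add_comm _ k, replicate_add, convWord]
  simp only [append_assoc]

theorem convWord_add_left (n k : ℕ) : convWord (n + k) n = replicate n 0 ++ replicate k 1 := by
  simp [convWord]

theorem convWord_add_right (m k : ℕ) : convWord m (m + k) = replicate m 0 ++ replicate k 2 := by
  simp [convWord]

theorem convWord_injective : Injective2 convWord := by
  have counts : ∀ m n, (convWord m n).count 0 + (convWord m n).count 1 = m ∧
      (convWord m n).count 0 + (convWord m n).count 2 = n := by
    intro m n
    simp [convWord, count_replicate]
  intro m m' n n' h
  obtain ⟨hm, hn⟩ := counts m n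
  obtain ⟨hm', hn'⟩ := counts m' n'
  rw [h] at hm hn
  omega

theorem mem_convLang_iff {R : ℕ → ℕ → Prop} {m n : ℕ} : convWord m n ∈ convLang R ↔ R m n :=
  ⟨fun ⟨_, _, hR, h⟩ => (convWord_injective h).1 ▸ (convWord_injective h).2 ▸ hR,
    fun h => ⟨m, n, h, rfl⟩⟩

namespace DFA

variable {σ : Type*} (M : DFA (Fin 3) σ)

theorem rel_of_eval_convWord_eq {R : ℕ → ℕ → Prop} (hM : M.accepts = convLang R) {m n m' n' : ℕ}
    (heq : M.eval (convWord m' n') = M.eval (convWord m n)) (hR : R m n) : R m' n' := by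
  apply mem_convLang_iff.mp
  rw [← hM, mem_accepts, heq, ← mem_accepts, hM]
  exact mem_convLang_iff.mpr hR

variable [Fintype σ]

theorem eval_convWord_add_factorial_card_add_factorial_card {m n : ℕ} (hm : card σ ≤ m)
    (hn : card σ ≤ n) :
    M.eval (convWord (m + (card σ)!) (n + (card σ)!)) = M.eval (convWord m n) := by
  obtain ⟨k, m, n, rfl, rfl, hk⟩ : ∃ k m' n', m = m' + k ∧ n = n' + k ∧ card σ ≤ k :=
    ⟨min m n, m - min m n, n - min m n, by omega, by omega, le_min hm hn⟩
  rw [add_assoc, add_assoc, convWord_add_add, convWord_add_add, eval, evalFrom_of_append,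
    evalFrom_of_append, evalFrom_replicate_add_factorial_card _ _ _ hk]

theorem eval_convWord_add_factorial_card_left {m n : ℕ} (h : n + card σ ≤ m) :
    M.eval (convWord (m + (card σ)!) n) = M.eval (convWord m n) := by
  obtain ⟨k, rfl, hk⟩ : ∃ k, m = n + k ∧ card σ ≤ k := ⟨m - n, by omega, by omega⟩
  rw [add_assoc, convWord_add_left, convWord_add_left, eval, evalFrom_of_append,
    evalFrom_of_append, evalFrom_replicate_add_factorial_card _ _ _ hk]

theorem eval_convWord_add_factorial_card_right {m n : ℕ} (h : m + card σ ≤ n) :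
    M.eval (convWord m (n + (card σ)!)) = M.eval (convWord m n) := by
  obtain ⟨k, rfl, hk⟩ : ∃ k, n = m + k ∧ card σ ≤ k := ⟨n - m, by omega, by omega⟩
  rw [add_assoc, convWord_add_right, convWord_add_right, eval, evalFrom_of_append,
    evalFrom_of_append, evalFrom_replicate_add_factorial_card _ _ _ hk]

end DFA

theorem stmt0 (R : ℕ → ℕ → Prop) (hR : RegularRel R) :
    ∃ D : ℕ, 0 < D ∧ ∀ (l m n : ℕ), R m n →
      (m < l ∨ l + D ≤ m) → (n < l ∨ l + D ≤ n) →
      R (if l + D ≤ m then m + D else m) (if l + D ≤ n then n + D else n) := by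
  obtain ⟨σ, _, M, hM⟩ := hR
  have hcard : card σ ≤ (card σ)! := self_le_factorial _
  refine ⟨(card σ)!, factorial_pos _, fun l m n hR hm hn => M.rel_of_eval_convWord_eq hM ?_ hR⟩
  split_ifs
  · exact M.eval_convWord_add_factorial_card_add_factorial_card (by omega) (by omega)
  · exact M.eval_convWord_add_factorial_card_left (by omega)
  · exact M.eval_convWord_add_factorial_card_right (by omega)
  · rfl
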